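/- arXiv:2411.01461 — 2 statements merged into one kernel-verified Lean document; each statement's English description precedes it below -/
import Mathlib

section
/- Let λ₊(ξ) = (-1 + √(1-4γ|ξ|²))/(2γ) and λ₋(ξ) = (-1 - √(1-4γ|ξ|²))/(2γ) for γ > 0 and ξ ∈ ℝ², with the square root interpreted as a purely imaginary number when 1 - 4γ|ξ|² < 0. Define K̂₀(ξ,t) = (e^{λ₊t} + e^{λ₋t})/2 and K̂₁(ξ,t) = (e^{λ₊t} - e^{λ₋t})/(γ(λ₊ - λ₋)). Then for all ξ with 4γ|ξ|² ≥ 3/4 and all t > 0, one has |K̂₀(ξ,t)| ≤ C e^{-t/(8γ)} and |K̂₁(ξ,t)| ≤ C e^{-t/(8γ)} for an absolute constant C. -/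
/-! In the high-frequency region the real part of `√(1-4γ|ξ|²)` lies in `[0, 1/2]`, so both roots
satisfy `Re λ± ≤ -1/(4γ)`, which bounds `K̂₀` by `e^{-t/(4γ)}` at once. For `K̂₁`, the exponential
is `e^r`-Lipschitz on the half-plane `Re z ≤ r`, so the numerator is at most
`t |λ₊ - λ₋| e^{-t/(4γ)}`; the resulting factor `t/γ` is absorbed by half of the decay, since
`u e^{-2u} ≤ e^{-u}`. -/

open Real

noncomputable section

/-- The square root of the discriminant `1 - 4γ|ξ|²`, interpreted as a purely
imaginary number when `1 - 4γ|ξ|² < 0`. -/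
def discRoot (γ : ℝ) (ξ : EuclideanSpace ℝ (Fin 2)) : ℂ :=
  if 0 ≤ 1 - 4 * γ * ‖ξ‖ ^ 2 then ((Real.sqrt (1 - 4 * γ * ‖ξ‖ ^ 2) : ℝ) : ℂ)
  else Complex.I * ((Real.sqrt (4 * γ * ‖ξ‖ ^ 2 - 1) : ℝ) : ℂ)

/-- `λ₊(ξ) = (-1 + √(1-4γ|ξ|²))/(2γ)`. -/
def lamPlus (γ : ℝ) (ξ : EuclideanSpace ℝ (Fin 2)) : ℂ :=
  (-1 + discRoot γ ξ) / (2 * (γ : ℂ))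

/-- `λ₋(ξ) = (-1 - √(1-4γ|ξ|²))/(2γ)`. -/
def lamMinus (γ : ℝ) (ξ : EuclideanSpace ℝ (Fin 2)) : ℂ :=
  (-1 - discRoot γ ξ) / (2 * (γ : ℂ))

/-- `K̂₀(ξ,t) = (e^{λ₊t} + e^{λ₋t})/2`. -/
def K0hat (γ : ℝ) (ξ : EuclideanSpace ℝ (Fin 2)) (t : ℝ) : ℂ :=
  (Complex.exp (lamPlus γ ξ * (t : ℂ)) + Complex.exp (lamMinus γ ξ * (t : ℂ))) / 2

/-- `K̂₁(ξ,t) = (e^{λ₊t} - e^{λ₋t})/(γ(λ₊ - λ₋))`. -/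
def K1hat (γ : ℝ) (ξ : EuclideanSpace ℝ (Fin 2)) (t : ℝ) : ℂ :=
  (Complex.exp (lamPlus γ ξ * (t : ℂ)) - Complex.exp (lamMinus γ ξ * (t : ℂ))) /
    ((γ : ℂ) * (lamPlus γ ξ - lamMinus γ ξ))

theorem Complex.norm_exp_sub_exp_le {z w : ℂ} {r : ℝ} (hz : z.re ≤ r) (hw : w.re ≤ r) :
    ‖Complex.exp z - Complex.exp w‖ ≤ Real.exp r * ‖z - w‖ :=
  (convex_halfSpace_re_le r).norm_image_sub_le_of_norm_deriv_le
    (fun _ _ => Complex.differentiableAt_exp)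
    (fun c hc => by rw [Complex.deriv_exp, Complex.norm_exp]; exact Real.exp_le_exp.2 hc) hw hz

theorem Real.mul_exp_neg_two_mul_le (u : ℝ) : u * Real.exp (-(2 * u)) ≤ Real.exp (-u) := by
  have h := Real.mul_exp_neg_le_exp_neg_one u
  have h1 : Real.exp (-1) ≤ 1 := Real.exp_le_one_iff.2 (by norm_num)
  calc u * Real.exp (-(2 * u)) = u * Real.exp (-u) * Real.exp (-u) := by
        rw [mul_assoc, ← Real.exp_add]; ring_nf
    _ ≤ 1 * Real.exp (-u) := by gcongr; linarith
    _ = Real.exp (-u) := one_mul _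

theorem abs_re_discRoot_le {γ : ℝ} {ξ : EuclideanSpace ℝ (Fin 2)}
    (hξ : 3 / 4 ≤ 4 * γ * ‖ξ‖ ^ 2) : |(discRoot γ ξ).re| ≤ 1 / 2 := by
  unfold discRoot
  split_ifs
  · rw [Complex.ofReal_re, abs_of_nonneg (Real.sqrt_nonneg _), Real.sqrt_le_left (by norm_num)]
    linarith
  · simp

theorem re_neg_one_add_div_le {γ : ℝ} (hγ : 0 < γ) {d : ℂ} (hd : d.re ≤ 1 / 2) :
    ((-1 + d) / (2 * (γ : ℂ))).re ≤ -(1 / (4 * γ)) := by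
  rw [← Complex.ofReal_ofNat, ← Complex.ofReal_mul, Complex.div_ofReal_re, div_le_iff₀ (by positivity)]
  field_simp
  simp only [Complex.add_re, Complex.neg_re, Complex.one_re]
  linarith

theorem re_lamPlus_le {γ : ℝ} {ξ : EuclideanSpace ℝ (Fin 2)} (hγ : 0 < γ)
    (hξ : 3 / 4 ≤ 4 * γ * ‖ξ‖ ^ 2) : (lamPlus γ ξ).re ≤ -(1 / (4 * γ)) :=
  re_neg_one_add_div_le hγ (abs_le.1 (abs_re_discRoot_le hξ)).2

theorem re_lamMinus_le {γ : ℝ} {ξ : EuclideanSpace ℝ (Fin 2)} (hγ : 0 < γ)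
    (hξ : 3 / 4 ≤ 4 * γ * ‖ξ‖ ^ 2) : (lamMinus γ ξ).re ≤ -(1 / (4 * γ)) := by
  rw [lamMinus, sub_eq_add_neg]
  refine re_neg_one_add_div_le hγ ?_
  rw [Complex.neg_re]
  linarith [(abs_le.1 (abs_re_discRoot_le hξ)).1]

theorem re_mul_ofReal_le {γ t : ℝ} {z : ℂ} (hz : z.re ≤ -(1 / (4 * γ))) (ht : 0 ≤ t) :
    (z * t).re ≤ -(t / (4 * γ)) := by
  calc (z * t).re = z.re * t := Complex.re_mul_ofReal z t
    _ ≤ -(1 / (4 * γ)) * t := mul_le_mul_of_nonneg_right hz ht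
    _ = -(t / (4 * γ)) := by ring

theorem norm_K0hat_le {γ t : ℝ} {ξ : EuclideanSpace ℝ (Fin 2)} (hγ : 0 < γ) (ht : 0 ≤ t)
    (hξ : 3 / 4 ≤ 4 * γ * ‖ξ‖ ^ 2) : ‖K0hat γ ξ t‖ ≤ Real.exp (-(t / (4 * γ))) := by
  have hplus := Real.exp_le_exp.2 (re_mul_ofReal_le (re_lamPlus_le hγ hξ) ht)
  have hminus := Real.exp_le_exp.2 (re_mul_ofReal_le (re_lamMinus_le hγ hξ) ht)
  rw [K0hat, norm_div, Complex.norm_two, div_le_iff₀ two_pos]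
  calc _ ≤ ‖Complex.exp (lamPlus γ ξ * t)‖ + ‖Complex.exp (lamMinus γ ξ * t)‖ := norm_add_le _ _
    _ ≤ _ := by rw [Complex.norm_exp, Complex.norm_exp]; linarith

theorem norm_K1hat_le {γ t : ℝ} {ξ : EuclideanSpace ℝ (Fin 2)} (hγ : 0 < γ) (ht : 0 ≤ t)
    (hξ : 3 / 4 ≤ 4 * γ * ‖ξ‖ ^ 2) : ‖K1hat γ ξ t‖ ≤ t / γ * Real.exp (-(t / (4 * γ))) := by
  by_cases hdiff : lamPlus γ ξ - lamMinus γ ξ = 0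
  · -- double root: Lean's `x / 0 = 0` makes `K̂₁` vanish
    rw [K1hat, hdiff, mul_zero, div_zero, norm_zero]
    positivity
  have hnum := Complex.norm_exp_sub_exp_le (re_mul_ofReal_le (re_lamPlus_le hγ hξ) ht)
    (re_mul_ofReal_le (re_lamMinus_le hγ hξ) ht)
  rw [← sub_mul, norm_mul, Complex.norm_real, Real.norm_of_nonneg ht] at hnum
  rw [K1hat, norm_div, norm_mul, Complex.norm_real, Real.norm_of_nonneg hγ.le,
    div_le_iff₀ (by positivity)]
  exact hnum.trans_eq (by field_simp)

/-- High-frequency bounds: for `4γ|ξ|² ≥ 3/4` and `t > 0`,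
`|K̂₀(ξ,t)| ≤ C e^{-t/(8γ)}` and `|K̂₁(ξ,t)| ≤ C e^{-t/(8γ)}`. -/
theorem stmt_5 :
    ∃ C : ℝ, 0 < C ∧ ∀ (γ t : ℝ) (ξ : EuclideanSpace ℝ (Fin 2)),
      0 < γ → 0 < t → 3/4 ≤ 4 * γ * ‖ξ‖ ^ 2 →
        ‖K0hat γ ξ t‖ ≤ C * Real.exp (-(t / (8 * γ))) ∧
        ‖K1hat γ ξ t‖ ≤ C * Real.exp (-(t / (8 * γ))) := by
  refine ⟨8, by norm_num, fun γ t ξ hγ ht hξ => ⟨?_, ?_⟩⟩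
  · calc ‖K0hat γ ξ t‖ ≤ Real.exp (-(t / (4 * γ))) := norm_K0hat_le hγ ht.le hξ
      _ ≤ Real.exp (-(t / (8 * γ))) := by gcongr; norm_num
      _ ≤ 8 * Real.exp (-(t / (8 * γ))) := by linarith [Real.exp_pos (-(t / (8 * γ)))]
  · calc ‖K1hat γ ξ t‖ ≤ t / γ * Real.exp (-(t / (4 * γ))) := norm_K1hat_le hγ ht.le hξ
      _ = 8 * (t / (8 * γ) * Real.exp (-(2 * (t / (8 * γ))))) := by ring_nf
      _ ≤ 8 * Real.exp (-(t / (8 * γ))) := by gcongr; exact Real.mul_exp_neg_two_mul_le _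

end
end

section
/- With the notation of the previous statement, for all ξ with 4γ|ξ|² ≥ 3/4, all t > 0, and every 0 ≤ ϑ ≤ 1, one has |K̂₁(ξ,t)| ≤ C γ^{-ϑ/2} |ξ|^{-ϑ} e^{-t/(8γ)} for an absolute constant C. -/
open Real

noncomputable section

/-! With `τ = t/(2γ)` and `D = discRoot γ ξ`, both exponentials share the decay `e^{-τ}` and
`K̂₁ = e^{-τ} · 2 sinh(Dτ)/D`. If `D = s ∈ [0, 1/2]` is real, `sinh(sτ) ≤ sτ e^{sτ}` gives
`|K̂₁| ≤ 2τ e^{-τ/2} ≤ 8 e^{-τ/4}`; if `D = i s` is imaginary, `2 sin(sτ)/s` is bounded both by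
`2τ` and by `2/s ≤ 2 (γ|ξ|²)^{-1/2}`. The weight `(γ|ξ|²)^{-ϑ/2} = γ^{-ϑ/2}|ξ|^{-ϑ}` is at
least `1` when `γ|ξ|² ≤ 1` and at least `(γ|ξ|²)^{-1/2}` when `γ|ξ|² ≥ 1`, so one of the two
bounds applies. -/

lemma exp_sub_exp_le_mul_exp (a b : ℝ) : Real.exp a - Real.exp b ≤ (a - b) * Real.exp a := by
  have hsplit : Real.exp b = Real.exp a * Real.exp (b - a) := by rw [← Real.exp_add]; ring_nf
  nlinarith [Real.add_one_le_exp (b - a), Real.exp_pos a]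

lemma sinh_le_mul_exp (x : ℝ) : Real.sinh x ≤ x * Real.exp x := by
  rw [Real.sinh_eq]
  linarith [exp_sub_exp_le_mul_exp x (-x)]

lemma mul_exp_neg_half_le (τ : ℝ) : τ * Real.exp (-(τ / 2)) ≤ 4 * Real.exp (-(τ / 4)) := by
  have hsplit : Real.exp (-(τ / 2)) = Real.exp (-(τ / 4)) * Real.exp (-(τ / 4)) := by
    rw [← Real.exp_add]; ring_nf
  have hmax : τ / 4 * Real.exp (-(τ / 4)) ≤ 1 :=
    (Real.mul_exp_neg_le_exp_neg_one _).trans (Real.exp_le_one_iff.mpr (by norm_num))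
  rw [hsplit]
  nlinarith [Real.exp_pos (-(τ / 4))]

lemma rpow_neg_half_mul_rpow_neg {a r : ℝ} (ha : 0 ≤ a) (hr : 0 ≤ r) (ϑ : ℝ) :
    a ^ (-(ϑ / 2)) * r ^ (-ϑ) = (a * r ^ 2) ^ (-(ϑ / 2)) := by
  rw [Real.mul_rpow ha (by positivity), ← Real.rpow_natCast r 2, ← Real.rpow_mul hr]
  congr 2
  push_cast
  ring

section K1hat

variable {γ : ℝ} {ξ : EuclideanSpace ℝ (Fin 2)} {t : ℝ}

lemma K1hat_eq_exp_mul_sinh (hγ : γ ≠ 0) :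
    K1hat γ ξ t = Complex.exp (-((t / (2 * γ) : ℝ) : ℂ)) *
      (2 * Complex.sinh (discRoot γ ξ * (t / (2 * γ) : ℝ)) / discRoot γ ξ) := by
  have hγ' : (γ : ℂ) ≠ 0 := by exact_mod_cast hγ
  have hplus : lamPlus γ ξ * t = -((t / (2 * γ) : ℝ) : ℂ) + discRoot γ ξ * (t / (2 * γ) : ℝ) := by
    rw [lamPlus]; push_cast; field_simp
  have hminus :
      lamMinus γ ξ * t = -((t / (2 * γ) : ℝ) : ℂ) + -(discRoot γ ξ * (t / (2 * γ) : ℝ)) := by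
    rw [lamMinus]; push_cast; field_simp; ring
  have hdiff : (γ : ℂ) * (lamPlus γ ξ - lamMinus γ ξ) = discRoot γ ξ := by
    rw [lamPlus, lamMinus]; field_simp; ring
  rw [K1hat, hplus, hminus, hdiff, Complex.exp_add, Complex.exp_add, Complex.two_sinh]
  ring

lemma K1hat_of_disc_nonneg (hγ : γ ≠ 0) (hd : 0 ≤ 1 - 4 * γ * ‖ξ‖ ^ 2) :
    K1hat γ ξ t = ((Real.exp (-(t / (2 * γ))) * (2 * Real.sinh (√(1 - 4 * γ * ‖ξ‖ ^ 2) *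
      (t / (2 * γ))) / √(1 - 4 * γ * ‖ξ‖ ^ 2)) : ℝ) : ℂ) := by
  rw [K1hat_eq_exp_mul_sinh hγ, discRoot, if_pos hd]
  push_cast
  rfl

lemma K1hat_of_disc_neg (hγ : γ ≠ 0) (hd : 1 - 4 * γ * ‖ξ‖ ^ 2 < 0) :
    K1hat γ ξ t = ((Real.exp (-(t / (2 * γ))) * (2 * Real.sin (√(4 * γ * ‖ξ‖ ^ 2 - 1) *
      (t / (2 * γ))) / √(4 * γ * ‖ξ‖ ^ 2 - 1)) : ℝ) : ℂ) := by
  have hs : (√(4 * γ * ‖ξ‖ ^ 2 - 1) : ℂ) ≠ 0 := by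
    exact_mod_cast (Real.sqrt_pos.mpr (by linarith)).ne'
  rw [K1hat_eq_exp_mul_sinh hγ, discRoot, if_neg hd.not_ge,
    mul_comm Complex.I, mul_assoc, mul_comm Complex.I, ← mul_assoc, Complex.sinh_mul_I]
  push_cast
  field_simp

lemma norm_K1hat_le_of_disc_nonneg (hγ : 0 < γ) (ht : 0 ≤ t) (hfreq : 3/4 ≤ 4 * γ * ‖ξ‖ ^ 2)
    (hd : 0 ≤ 1 - 4 * γ * ‖ξ‖ ^ 2) :
    ‖K1hat γ ξ t‖ ≤ 2 * (t / (2 * γ)) * Real.exp (-(t / (2 * γ) / 2)) := by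
  set τ := t / (2 * γ)
  set s := √(1 - 4 * γ * ‖ξ‖ ^ 2)
  have hτ : 0 ≤ τ := by positivity
  have hs : s ≤ 1 / 2 := by
    rw [Real.sqrt_le_left (by norm_num)]; linarith
  have hsinh : 2 * Real.sinh (s * τ) / s ≤ 2 * τ * Real.exp (s * τ) := by
    rcases (Real.sqrt_nonneg _ : 0 ≤ s).eq_or_lt with hs0 | hs0
    · rw [show s = 0 from hs0.symm]; simp only [div_zero]; positivity
    · rw [div_le_iff₀ hs0]; nlinarith [sinh_le_mul_exp (s * τ)]
  have hdecay : Real.exp (-τ) * Real.exp (s * τ) ≤ Real.exp (-(τ / 2)) := by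
    rw [← Real.exp_add, Real.exp_le_exp]; nlinarith
  rw [K1hat_of_disc_nonneg hγ.ne' hd, Complex.norm_real, Real.norm_of_nonneg (by positivity)]
  calc Real.exp (-τ) * (2 * Real.sinh (s * τ) / s)
      ≤ Real.exp (-τ) * (2 * τ * Real.exp (s * τ)) := by gcongr
    _ = 2 * τ * (Real.exp (-τ) * Real.exp (s * τ)) := by ring
    _ ≤ 2 * τ * Real.exp (-(τ / 2)) := by gcongr

lemma norm_K1hat_of_disc_neg (hγ : γ ≠ 0) (hd : 1 - 4 * γ * ‖ξ‖ ^ 2 < 0) :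
    ‖K1hat γ ξ t‖ = Real.exp (-(t / (2 * γ))) *
      (2 * |Real.sin (√(4 * γ * ‖ξ‖ ^ 2 - 1) * (t / (2 * γ)))| / √(4 * γ * ‖ξ‖ ^ 2 - 1)) := by
  rw [K1hat_of_disc_neg hγ hd, Complex.norm_real, Real.norm_eq_abs, abs_mul, abs_div, abs_mul,
    abs_of_pos (Real.exp_pos _), abs_two, abs_of_nonneg (Real.sqrt_nonneg _)]

lemma norm_K1hat_le_of_disc_neg (hγ : 0 < γ) (ht : 0 ≤ t) (hd : 1 - 4 * γ * ‖ξ‖ ^ 2 < 0) :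
    ‖K1hat γ ξ t‖ ≤ 2 * (t / (2 * γ)) * Real.exp (-(t / (2 * γ) / 2)) := by
  set τ := t / (2 * γ)
  set s := √(4 * γ * ‖ξ‖ ^ 2 - 1)
  have hτ : 0 ≤ τ := by positivity
  have hs : 0 < s := Real.sqrt_pos.mpr (by linarith)
  have hsin : 2 * |Real.sin (s * τ)| / s ≤ 2 * τ := by
    rw [div_le_iff₀ hs]
    nlinarith [Real.abs_sin_le_abs (x := s * τ), abs_of_nonneg (by positivity : 0 ≤ s * τ)]
  rw [norm_K1hat_of_disc_neg hγ.ne' hd]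
  calc Real.exp (-τ) * (2 * |Real.sin (s * τ)| / s)
      ≤ Real.exp (-(τ / 2)) * (2 * τ) :=
        mul_le_mul (Real.exp_le_exp.mpr (by linarith)) hsin (by positivity) (Real.exp_nonneg _)
    _ = 2 * τ * Real.exp (-(τ / 2)) := by ring

lemma norm_K1hat_le_exp_div_sqrt_of_disc_neg (hγ : 0 < γ) (hd : 1 - 4 * γ * ‖ξ‖ ^ 2 < 0) :
    ‖K1hat γ ξ t‖ ≤ 2 * Real.exp (-(t / (2 * γ))) / √(4 * γ * ‖ξ‖ ^ 2 - 1) := by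
  rw [norm_K1hat_of_disc_neg hγ.ne' hd]
  calc _ ≤ Real.exp (-(t / (2 * γ))) * (2 * 1 / √(4 * γ * ‖ξ‖ ^ 2 - 1)) := by
        gcongr
        exact Real.abs_sin_le_one _
    _ = _ := by ring

lemma norm_K1hat_le_exp (hγ : 0 < γ) (ht : 0 ≤ t) (hfreq : 3/4 ≤ 4 * γ * ‖ξ‖ ^ 2) :
    ‖K1hat γ ξ t‖ ≤ 8 * Real.exp (-(t / (8 * γ))) := by
  have hτ := mul_exp_neg_half_le (t / (2 * γ))
  rw [show t / (2 * γ) / 4 = t / (8 * γ) by field_simp; ring] at hτ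
  rcases le_or_gt 0 (1 - 4 * γ * ‖ξ‖ ^ 2) with hd | hd
  · linarith [norm_K1hat_le_of_disc_nonneg hγ ht hfreq hd]
  · linarith [norm_K1hat_le_of_disc_neg hγ ht hd]

lemma norm_K1hat_le_rpow_neg_half (hγ : 0 < γ) (ht : 0 ≤ t) (hA : 1 ≤ γ * ‖ξ‖ ^ 2) :
    ‖K1hat γ ξ t‖ ≤ 2 * (γ * ‖ξ‖ ^ 2) ^ (-(1 / 2) : ℝ) * Real.exp (-(t / (8 * γ))) := by
  have hd : 1 - 4 * γ * ‖ξ‖ ^ 2 < 0 := by linarith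
  have hsqrt : √(γ * ‖ξ‖ ^ 2) ≤ √(4 * γ * ‖ξ‖ ^ 2 - 1) := Real.sqrt_le_sqrt (by linarith)
  have hrpow : (γ * ‖ξ‖ ^ 2) ^ (-(1 / 2) : ℝ) = (√(γ * ‖ξ‖ ^ 2))⁻¹ := by
    rw [Real.sqrt_eq_rpow, Real.rpow_neg (by linarith)]
  have hdecay : Real.exp (-(t / (2 * γ))) ≤ Real.exp (-(t / (8 * γ))) := by
    gcongr
    norm_num
  calc ‖K1hat γ ξ t‖ ≤ 2 * Real.exp (-(t / (2 * γ))) / √(4 * γ * ‖ξ‖ ^ 2 - 1) :=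
        norm_K1hat_le_exp_div_sqrt_of_disc_neg hγ hd
    _ ≤ 2 * Real.exp (-(t / (8 * γ))) / √(γ * ‖ξ‖ ^ 2) := by
        gcongr
    _ = 2 * (γ * ‖ξ‖ ^ 2) ^ (-(1 / 2) : ℝ) * Real.exp (-(t / (8 * γ))) := by
        rw [hrpow]; ring

end K1hat

/-- High-frequency bound with a gain of `ϑ` derivatives: for `4γ|ξ|² ≥ 3/4`, `t > 0`
and `0 ≤ ϑ ≤ 1`, `|K̂₁(ξ,t)| ≤ C γ^{-ϑ/2} |ξ|^{-ϑ} e^{-t/(8γ)}`. -/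
theorem stmt_6 :
    ∃ C : ℝ, 0 < C ∧ ∀ (γ t ϑ : ℝ) (ξ : EuclideanSpace ℝ (Fin 2)),
      0 < γ → 0 < t → 0 ≤ ϑ → ϑ ≤ 1 → 3/4 ≤ 4 * γ * ‖ξ‖ ^ 2 →
        ‖K1hat γ ξ t‖
          ≤ C * γ ^ (-(ϑ/2)) * ‖ξ‖ ^ (-ϑ) * Real.exp (-(t / (8 * γ))) := by
  refine ⟨8, by norm_num, fun γ t ϑ ξ hγ ht hϑ0 hϑ1 hfreq => ?_⟩
  rw [mul_assoc 8, rpow_neg_half_mul_rpow_neg hγ.le (norm_nonneg ξ)]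
  rcases le_or_gt (γ * ‖ξ‖ ^ 2) 1 with hA | hA
  · have hweight : 1 ≤ (γ * ‖ξ‖ ^ 2) ^ (-(ϑ / 2)) :=
      Real.one_le_rpow_of_pos_of_le_one_of_nonpos (by linarith) hA (by linarith)
    calc ‖K1hat γ ξ t‖ ≤ 8 * Real.exp (-(t / (8 * γ))) := norm_K1hat_le_exp hγ ht.le hfreq
      _ ≤ _ := by gcongr; exact le_mul_of_one_le_right (by norm_num) hweight
  · have hweight : (γ * ‖ξ‖ ^ 2) ^ (-(1 / 2) : ℝ) ≤ (γ * ‖ξ‖ ^ 2) ^ (-(ϑ / 2)) :=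
      Real.rpow_le_rpow_of_exponent_le hA.le (by linarith)
    calc ‖K1hat γ ξ t‖
        ≤ 2 * (γ * ‖ξ‖ ^ 2) ^ (-(1 / 2) : ℝ) * Real.exp (-(t / (8 * γ))) :=
          norm_K1hat_le_rpow_neg_half hγ ht.le hA.le
      _ ≤ _ := by gcongr; norm_num

end
end
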